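/- For every natural number m, the sum over k from 0 to m of (2m-2k-1)!! · (2k-1)!! / (k! · (m-k)!) equals 2^m, where (-1)!! = 1. -/
import Mathlib
open Nat

def dft (k : ℕ) : ℚ := ((2 * k - 1)‼ : ℕ) / ((k ! : ℕ) : ℚ)

lemma dft_rec (k : ℕ) : ((k : ℚ) + 1) * dft (k + 1) = (2 * k + 1) * dft k := by
  cases k with
  | zero => simp [dft, Nat.doubleFactorial]
  | succ n =>
    have h1 : 2 * (n + 1 + 1) - 1 = (2 * (n + 1) - 1) + 2 := by omega
    have h2 : ((2 * (n+1) - 1 + 2)‼ : ℕ) = (2*(n+1)+1) * (2*(n+1)-1)‼ := by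
      rw [Nat.doubleFactorial_add_two]; congr 1; try omega
    have hf : ((n+1+1)! : ℕ) = (n+2) * (n+1)! := by rw [Nat.factorial_succ]
    have hfz : ((n+1)! : ℚ) ≠ 0 := by exact_mod_cast (Nat.factorial_pos _).ne'
    rw [dft, dft, h1, h2, hf]
    push_cast
    field_simp
    ring

lemma dft_conv (m : ℕ) :
    ∑ k ∈ Finset.range (m + 1), dft k * dft (m - k) = 2 ^ m := by
  induction m with
  | zero => simp [dft, Nat.doubleFactorial]
  | succ m ih =>
    set S := ∑ k ∈ Finset.range (m + 1), dft k * dft (m - k) with hS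
    -- symmetry of weighted sums
    have refl1 : ∑ k ∈ Finset.range (m + 2), ((m + 1 - k : ℕ) : ℚ) * (dft k * dft (m + 1 - k))
        = ∑ k ∈ Finset.range (m + 2), (k : ℚ) * (dft k * dft (m + 1 - k)) := by
      rw [← Finset.sum_range_reflect]
      apply Finset.sum_congr rfl
      intro k hk
      have hk' : k ≤ m + 1 := by simpa [Nat.lt_succ_iff] using hk
      have : m + 2 - 1 - k = m + 1 - k := by omega
      rw [this]
      have : m + 1 - (m + 1 - k) = k := by omega
      rw [this]; ring
    have refl2 : ∑ j ∈ Finset.range (m + 1), ((m - j : ℕ) : ℚ) * (dft j * dft (m - j))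
        = ∑ j ∈ Finset.range (m + 1), (j : ℚ) * (dft j * dft (m - j)) := by
      rw [← Finset.sum_range_reflect]
      apply Finset.sum_congr rfl
      intro j hj
      have hj' : j ≤ m := by simpa [Nat.lt_succ_iff] using hj
      have : m + 1 - 1 - j = m - j := by omega
      rw [this]
      have : m - (m - j) = j := by omega
      rw [this]; ring
    -- A := weighted sum
    have hA : ∑ k ∈ Finset.range (m + 2), (k : ℚ) * (dft k * dft (m + 1 - k))
        = ((m : ℚ) + 1) * S := by
      rw [Finset.sum_range_succ']
      simp only [Nat.cast_add, Nat.cast_one]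
      have step : ∀ j ∈ Finset.range (m + 1),
          ((j : ℚ) + 1) * (dft (j + 1) * dft (m + 1 - (j + 1)))
          = (2 * j + 1) * (dft j * dft (m - j)) := by
        intro j hj
        have : m + 1 - (j + 1) = m - j := by omega
        rw [this, ← mul_assoc, dft_rec, mul_assoc]
      rw [Finset.sum_congr rfl step]
      have expand : ∑ j ∈ Finset.range (m + 1), (2 * (j:ℚ) + 1) * (dft j * dft (m - j))
          = 2 * (∑ j ∈ Finset.range (m + 1), (j : ℚ) * (dft j * dft (m - j))) + S := by
        rw [hS, Finset.mul_sum, ← Finset.sum_add_distrib]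
        apply Finset.sum_congr rfl
        intro j _; ring
      have half : 2 * (∑ j ∈ Finset.range (m + 1), (j : ℚ) * (dft j * dft (m - j)))
          = (m : ℚ) * S := by
        have := refl2
        have sum2 : (∑ j ∈ Finset.range (m + 1), (j : ℚ) * (dft j * dft (m - j)))
            + (∑ j ∈ Finset.range (m + 1), ((m - j : ℕ) : ℚ) * (dft j * dft (m - j)))
            = (m : ℚ) * S := by
          rw [hS, Finset.mul_sum, ← Finset.sum_add_distrib]
          apply Finset.sum_congr rfl
          intro j hj
          have hj' : j ≤ m := by simpa [Nat.lt_succ_iff] using hj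
          have : ((m - j : ℕ) : ℚ) = (m : ℚ) - j := by
            push_cast [hj']; ring
          rw [this]; ring
        linarith [sum2, refl2]
      simp only [Nat.cast_zero, zero_mul, add_zero, expand, half]
      ring
    -- main identity
    have key : ((m : ℚ) + 1) * (∑ k ∈ Finset.range (m + 2), dft k * dft (m + 1 - k))
        = ((m : ℚ) + 1) * (2 * S) := by
      rw [Finset.mul_sum]
      have split : ∀ k ∈ Finset.range (m + 2),
          ((m : ℚ) + 1) * (dft k * dft (m + 1 - k))
          = (k : ℚ) * (dft k * dft (m + 1 - k))
            + ((m + 1 - k : ℕ) : ℚ) * (dft k * dft (m + 1 - k)) := by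
        intro k hk
        have hk' : k ≤ m + 1 := by simpa [Nat.lt_succ_iff] using hk
        have : ((m + 1 - k : ℕ) : ℚ) = (m : ℚ) + 1 - k := by push_cast [hk']; ring
        rw [this]; ring
      rw [Finset.sum_congr rfl split, Finset.sum_add_distrib, refl1, hA]
      ring
    have hm1 : ((m : ℚ) + 1) ≠ 0 := by positivity
    have := mul_left_cancel₀ hm1 key
    rw [this, ih]
    ring

/-- The sum over k from 0 to m of (2m-2k-1)!! · (2k-1)!! / (k! · (m-k)!) equals 2^m,
with the convention (-1)!! = 1 (here realized by natural subtraction: 2·0-1 = 0 and 0!! = 1). -/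
theorem doubleFactorial_sum_eq_two_pow (m : ℕ) :
    ∑ k ∈ Finset.range (m + 1),
      (((2 * m - 2 * k - 1)‼ * (2 * k - 1)‼ : ℕ) : ℚ) / ((k ! * (m - k)! : ℕ) : ℚ)
      = 2 ^ m := by
  rw [← dft_conv m]
  apply Finset.sum_congr rfl
  intro k hk
  have : 2 * m - 2 * k = 2 * (m - k) := by omega
  rw [dft, dft, this]
  push_cast
  ring
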